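/- (Pairwise near-simultaneous default probability.) For any distinct i, j ∈ {1, …, K} and any ε > 0, P(|τ_i − τ_j| ≤ ε) = 1 − ∫_0^∞ α_j(y) exp(−A_j(y) − A_i(y+ε) − A_0(y+ε)) dy − ∫_0^∞ α_i(y) exp(−A_i(y) − A_j(y+ε) − A_0(y+ε)) dy. -/

import Mathlib

open MeasureTheory ProbabilityTheory

/-- The cumulative hazard `A(t) = ∫_0^t α(s) ds`. -/
noncomputable def cumHaz (α : ℝ → ℝ) (t : ℝ) : ℝ := ∫ s in (0:ℝ)..t, α s

/-- The first time `s ≥ 0` at which the cumulative hazard reaches level `z`,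
i.e. `inf {s ≥ 0 : A(s) ≥ z}`. -/
noncomputable def hitTime (α : ℝ → ℝ) (z : ℝ) : ℝ :=
  sInf {s : ℝ | 0 ≤ s ∧ z ≤ cumHaz α s}

/-! The event `|τ_i - τ_j| > ε` is the disjoint union of the event that `η_i + ε` precedes both
`η_j` and `η_0` and the same event with `i` and `j` exchanged. Since `η_k > t ↔ A_k(t) < Z_k`,
independence turns the probability of the first one into `E[exp(-A_j(η_i + ε) - A_0(η_i + ε))]`,
and the substitution `Z_i = A_i(y)` writes this expectation as an integral against the density
`α_i(y) e^{-A_i(y)}` of `η_i`. -/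

open Set Real Filter
open scoped ENNReal

section cumHaz

variable {α : ℝ → ℝ}

lemma cumHaz_zero : cumHaz α 0 = 0 := intervalIntegral.integral_same

/-- Makes the fundamental theorem of calculus for continuous integrands available for `cumHaz α`
on `[0, ∞)`. -/
lemma eqOn_cumHaz_primitive :
    EqOn (cumHaz α) (fun t => ∫ s in (0:ℝ)..t, α (max s 0)) (Ici 0) := fun t ht =>
  intervalIntegral.integral_congr fun s hs => by
    rw [uIcc_of_le ht] at hs
    rw [max_eq_left hs.1]

lemma continuous_comp_max_zero (hcont : ContinuousOn α (Ici 0)) :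
    Continuous fun s => α (max s 0) :=
  hcont.comp_continuous (continuous_id.max continuous_const) fun s => le_max_right s 0

lemma hasDerivAt_cumHaz (hcont : ContinuousOn α (Ici 0)) {y : ℝ} (hy : 0 < y) :
    HasDerivAt (cumHaz α) (α y) y := by
  have h := ((continuous_comp_max_zero hcont).integral_hasStrictDerivAt 0 y).hasDerivAt
  rw [max_eq_left hy.le] at h
  exact h.congr_of_eventuallyEq <| mem_of_superset (Ioi_mem_nhds hy)
    fun t ht => eqOn_cumHaz_primitive (mem_Ici.2 (le_of_lt ht))

lemma continuousOn_cumHaz (hcont : ContinuousOn α (Ici 0)) : ContinuousOn (cumHaz α) (Ici 0) :=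
  (continuous_iff_continuousAt.2 fun t =>
    ((continuous_comp_max_zero hcont).integral_hasStrictDerivAt 0 t).hasDerivAt.continuousAt)
    |>.continuousOn.congr eqOn_cumHaz_primitive

lemma strictMonoOn_cumHaz (hpos : ∀ t, 0 ≤ t → 0 < α t) (hcont : ContinuousOn α (Ici 0)) :
    StrictMonoOn (cumHaz α) (Ici 0) :=
  strictMonoOn_of_deriv_pos (convex_Ici 0) (continuousOn_cumHaz hcont) fun y hy => by
    rw [interior_Ici] at hy
    rw [(hasDerivAt_cumHaz hcont hy).deriv]
    exact hpos y (le_of_lt hy)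

lemma cumHaz_nonneg (hpos : ∀ t, 0 ≤ t → 0 < α t) (hcont : ContinuousOn α (Ici 0))
    {t : ℝ} (ht : 0 ≤ t) : 0 ≤ cumHaz α t :=
  cumHaz_zero (α := α) ▸ (strictMonoOn_cumHaz hpos hcont).monotoneOn self_mem_Ici ht ht

lemma image_cumHaz_Ioi (hpos : ∀ t, 0 ≤ t → 0 < α t) (hcont : ContinuousOn α (Ici 0))
    (htop : Tendsto (cumHaz α) atTop atTop) : cumHaz α '' Ioi 0 = Ioi 0 := by
  have hA := intermediate_value_Ioi (continuousOn_cumHaz hcont) htop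
  rw [cumHaz_zero] at hA
  refine Subset.antisymm ?_ hA
  rintro _ ⟨y, hy, rfl⟩
  simpa only [mem_Ioi, cumHaz_zero] using
    strictMonoOn_cumHaz hpos hcont self_mem_Ici (mem_Ici.2 (le_of_lt hy)) hy

lemma exists_nonneg_le_cumHaz (htop : Tendsto (cumHaz α) atTop atTop) (z : ℝ) :
    ∃ s, 0 ≤ s ∧ z ≤ cumHaz α s := by
  obtain ⟨s, hs, hs0⟩ := ((htop.eventually_ge_atTop z).and (eventually_ge_atTop 0)).exists
  exact ⟨s, hs0, hs⟩

lemma hitTime_nonneg (htop : Tendsto (cumHaz α) atTop atTop) (z : ℝ) : 0 ≤ hitTime α z :=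
  le_csInf (exists_nonneg_le_cumHaz htop z) fun _ hs => hs.1

lemma monotone_hitTime (htop : Tendsto (cumHaz α) atTop atTop) : Monotone (hitTime α) :=
  fun _ z' h => csInf_le_csInf ⟨0, fun _ hs => hs.1⟩ (exists_nonneg_le_cumHaz htop z')
    fun _ hs => ⟨hs.1, h.trans hs.2⟩

lemma hitTime_mem (hcont : ContinuousOn α (Ici 0)) (htop : Tendsto (cumHaz α) atTop atTop)
    (z : ℝ) : hitTime α z ∈ {s : ℝ | 0 ≤ s ∧ z ≤ cumHaz α s} :=
  ((continuousOn_cumHaz hcont).preimage_isClosed_of_isClosed isClosed_Ici isClosed_Ici).csInf_mem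
    (exists_nonneg_le_cumHaz htop z) ⟨0, fun _ hs => hs.1⟩

lemma hitTime_le_iff (hpos : ∀ t, 0 ≤ t → 0 < α t) (hcont : ContinuousOn α (Ici 0))
    (htop : Tendsto (cumHaz α) atTop atTop) {t : ℝ} (ht : 0 ≤ t) (z : ℝ) :
    hitTime α z ≤ t ↔ z ≤ cumHaz α t := by
  obtain ⟨h0, hz⟩ := hitTime_mem hcont htop z
  exact ⟨fun h => hz.trans ((strictMonoOn_cumHaz hpos hcont).monotoneOn h0 ht h),
    fun h => csInf_le ⟨0, fun _ hs => hs.1⟩ ⟨ht, h⟩⟩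

lemma lt_hitTime_iff (hpos : ∀ t, 0 ≤ t → 0 < α t) (hcont : ContinuousOn α (Ici 0))
    (htop : Tendsto (cumHaz α) atTop atTop) {t : ℝ} (ht : 0 ≤ t) (z : ℝ) :
    t < hitTime α z ↔ cumHaz α t < z :=
  not_le.symm.trans ((hitTime_le_iff hpos hcont htop ht z).not.trans not_le)

lemma hitTime_cumHaz (hpos : ∀ t, 0 ≤ t → 0 < α t) (hcont : ContinuousOn α (Ici 0))
    (htop : Tendsto (cumHaz α) atTop atTop) {y : ℝ} (hy : 0 ≤ y) :
    hitTime α (cumHaz α y) = y := by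
  obtain ⟨h0, hle⟩ := hitTime_mem hcont htop (cumHaz α y)
  exact le_antisymm ((hitTime_le_iff hpos hcont htop hy _).2 le_rfl)
    (((strictMonoOn_cumHaz hpos hcont).le_iff_le hy h0).1 hle)

lemma lintegral_Ioi_eq_lintegral_cumHaz (hpos : ∀ t, 0 ≤ t → 0 < α t)
    (hcont : ContinuousOn α (Ici 0)) (htop : Tendsto (cumHaz α) atTop atTop)
    (g : ℝ → ℝ≥0∞) :
    ∫⁻ z in Ioi 0, g z = ∫⁻ y in Ioi 0, ENNReal.ofReal (α y) * g (cumHaz α y) := by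
  conv_lhs => rw [← image_cumHaz_Ioi hpos hcont htop]
  exact lintegral_image_eq_lintegral_deriv_mul_of_monotoneOn measurableSet_Ioi
    (fun y hy => (hasDerivAt_cumHaz hcont hy).hasDerivWithinAt)
    ((strictMonoOn_cumHaz hpos hcont).monotoneOn.mono Ioi_subset_Ici_self) g

end cumHaz

section exponential

lemma expMeasure_one_Ioi {t : ℝ} (ht : 0 ≤ t) :
    expMeasure 1 (Ioi t) = ENNReal.ofReal (exp (-t)) := by
  rw [expMeasure, gammaMeasure, withDensity_apply _ measurableSet_Ioi,
    setLIntegral_congr_fun measurableSet_Ioi (g := fun x => ENNReal.ofReal (exp (-x)))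
      fun x hx => by simp [gammaPDF_eq, ht.trans (le_of_lt hx)],
    ← ofReal_integral_eq_lintegral_ofReal, integral_exp_neg_Ioi]
  · simpa [IntegrableOn] using exp_neg_integrableOn_Ioi t one_pos
  · exact ae_of_all _ fun x => (exp_pos _).le

lemma lintegral_expMeasure_one {g : ℝ → ℝ≥0∞} (hg : Measurable g) :
    ∫⁻ x, g x ∂expMeasure 1 = ∫⁻ x in Ioi 0, ENNReal.ofReal (exp (-x)) * g x := by
  rw [expMeasure, gammaMeasure, lintegral_withDensity_eq_lintegral_mul _ (f := gammaPDF 1 1)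
      (measurable_gammaPDFReal 1 1).ennreal_ofReal hg,
    setLIntegral_congr Ioi_ae_eq_Ici, ← lintegral_indicator measurableSet_Ici]
  refine lintegral_congr fun x => ?_
  by_cases hx : 0 ≤ x <;> simp [gammaPDF_eq, hx]

lemma map_eq_expMeasure_one {Ω : Type*} [MeasurableSpace Ω] {P : Measure Ω}
    [IsProbabilityMeasure P] {X : Ω → ℝ} (hX : Measurable X)
    (htail : ∀ t : ℝ, 0 ≤ t → P {ω | t < X ω} = ENNReal.ofReal (exp (-t))) :
    P.map X = expMeasure 1 := by
  have := isProbabilityMeasure_expMeasure one_pos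
  have := Measure.isProbabilityMeasure_map (μ := P) hX.aemeasurable
  have hIoi : ∀ t, 0 ≤ t → P.map X (Ioi t) = expMeasure 1 (Ioi t) := fun t ht => by
    rw [Measure.map_apply hX measurableSet_Ioi, expMeasure_one_Ioi ht]
    exact htail t ht
  have hone : ∀ (μ : Measure ℝ) [IsProbabilityMeasure μ], μ (Ioi 0) = 1 →
      ∀ t ≤ 0, μ (Ioi t) = 1 :=
    fun μ _ h t ht => le_antisymm prob_le_one (h ▸ measure_mono (Ioi_subset_Ioi ht))
  refine ext_of_generate_finite _ (borel_eq_generateFrom_Ioi ℝ) isPiSystem_Ioi ?_ (by simp)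
  rintro _ ⟨t, rfl⟩
  rcases le_total 0 t with ht | ht
  · exact hIoi t ht
  · have h0 := hIoi 0 le_rfl
    rw [expMeasure_one_Ioi le_rfl, neg_zero, exp_zero, ENNReal.ofReal_one] at h0
    rw [hone _ h0 t ht, hone _ ((hIoi 0 le_rfl).symm.trans h0) t ht]

end exponential

section clocks

variable {Ω : Type*} [MeasurableSpace Ω] {P : Measure Ω}

lemma measure_lt_and_lt_eq_lintegral_map [IsFiniteMeasure P] {X Y W : Ω → ℝ}
    (hX : Measurable X) (hY : Measurable Y) (hW : Measurable W)
    (hXYW : IndepFun X (fun ω => (Y ω, W ω)) P) (hYW : IndepFun Y W P) {u v : ℝ → ℝ} (hu : Measurable u) (hv : Measurable v) :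
    P {ω | u (X ω) < Y ω ∧ v (X ω) < W ω}
      = ∫⁻ x, P {ω | u x < Y ω} * P {ω | v x < W ω} ∂P.map X := by
  set S : Set (ℝ × ℝ × ℝ) := {p | u p.1 < p.2.1 ∧ v p.1 < p.2.2}
  have hS : MeasurableSet S :=
    (measurableSet_lt (hu.comp measurable_fst) (measurable_fst.comp measurable_snd)).inter
      (measurableSet_lt (hv.comp measurable_fst) (measurable_snd.comp measurable_snd))
  have hlaw : P.map (fun ω => (X ω, Y ω, W ω)) = (P.map X).prod ((P.map Y).prod (P.map W)) := by
    rw [(indepFun_iff_map_prod_eq_prod_map_map hX.aemeasurable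
        (hY.prodMk hW).aemeasurable).1 hXYW,
      (indepFun_iff_map_prod_eq_prod_map_map hY.aemeasurable hW.aemeasurable).1 hYW]
  change P ((fun ω => (X ω, Y ω, W ω)) ⁻¹' S) = _
  rw [← Measure.map_apply (hX.prodMk (hY.prodMk hW)) hS, hlaw, Measure.prod_apply hS]
  refine lintegral_congr fun x => ?_
  change ((P.map Y).prod (P.map W)) (Ioi (u x) ×ˢ Ioi (v x)) = _
  rw [Measure.prod_prod, Measure.map_apply hY measurableSet_Ioi,
    Measure.map_apply hW measurableSet_Ioi]
  rfl

variable {αa αb αc : ℝ → ℝ}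

lemma measurable_cumHaz_hitTime_add (hta : Tendsto (cumHaz αa) atTop atTop)
    (hpb : ∀ t, 0 ≤ t → 0 < αb t) (hcb : ContinuousOn αb (Ici 0)) {ε : ℝ}
    (hε : 0 ≤ ε) : Measurable fun z => cumHaz αb (hitTime αa z + ε) :=
  Monotone.measurable fun z z' h =>
    (strictMonoOn_cumHaz hpb hcb).monotoneOn (add_nonneg (hitTime_nonneg hta z) hε)
      (add_nonneg (hitTime_nonneg hta z') hε) (by gcongr; exact monotone_hitTime hta h)

lemma continuousOn_mul_exp_neg_cumHaz (hca : ContinuousOn αa (Ici 0))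
    (hcb : ContinuousOn αb (Ici 0)) (hcc : ContinuousOn αc (Ici 0)) {ε : ℝ} (hε : 0 ≤ ε) :
    ContinuousOn (fun y => αa y * exp (-cumHaz αa y - cumHaz αb (y + ε) - cumHaz αc (y + ε)))
      (Ioi 0) := by
  have hshift : MapsTo (fun y => y + ε) (Ioi 0) (Ici 0) := fun y hy =>
    mem_Ici.2 (add_nonneg (le_of_lt hy) hε)
  have hplus : ContinuousOn (fun y : ℝ => y + ε) (Ioi 0) := by fun_prop
  refine (hca.mono Ioi_subset_Ici_self).mul (ContinuousOn.rexp ?_)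
  exact (((continuousOn_cumHaz hca).mono Ioi_subset_Ici_self).neg.sub
    ((continuousOn_cumHaz hcb).comp hplus hshift)).sub ((continuousOn_cumHaz hcc).comp hplus hshift)

lemma measureReal_hitTime_add_lt_hitTime_and [IsProbabilityMeasure P] {Za Zb Zc : Ω → ℝ}
    (hpa : ∀ t, 0 ≤ t → 0 < αa t) (hca : ContinuousOn αa (Ici 0))
    (hta : Tendsto (cumHaz αa) atTop atTop)
    (hpb : ∀ t, 0 ≤ t → 0 < αb t) (hcb : ContinuousOn αb (Ici 0))
    (htb : Tendsto (cumHaz αb) atTop atTop)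
    (hpc : ∀ t, 0 ≤ t → 0 < αc t) (hcc : ContinuousOn αc (Ici 0))
    (htc : Tendsto (cumHaz αc) atTop atTop)
    (hZa : Measurable Za) (hZb : Measurable Zb) (hZc : Measurable Zc)
    (hexpa : ∀ t : ℝ, 0 ≤ t → P {ω | t < Za ω} = ENNReal.ofReal (exp (-t)))
    (hexpb : ∀ t : ℝ, 0 ≤ t → P {ω | t < Zb ω} = ENNReal.ofReal (exp (-t)))
    (hexpc : ∀ t : ℝ, 0 ≤ t → P {ω | t < Zc ω} = ENNReal.ofReal (exp (-t)))
    (hindep : IndepFun Za (fun ω => (Zb ω, Zc ω)) P) (hindep' : IndepFun Zb Zc P)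
    {ε : ℝ} (hε : 0 ≤ ε) :
    P.real {ω | hitTime αa (Za ω) + ε < hitTime αb (Zb ω) ∧
        hitTime αa (Za ω) + ε < hitTime αc (Zc ω)}
      = ∫ y in Ioi 0,
          αa y * exp (-cumHaz αa y - cumHaz αb (y + ε) - cumHaz αc (y + ε)) := by
  set u := fun z => cumHaz αb (hitTime αa z + ε)
  set v := fun z => cumHaz αc (hitTime αa z + ε)
  have hshift : ∀ z, 0 ≤ hitTime αa z + ε := fun z => add_nonneg (hitTime_nonneg hta z) hε
  have hu : Measurable u := measurable_cumHaz_hitTime_add hta hpb hcb hε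
  have hv : Measurable v := measurable_cumHaz_hitTime_add hta hpc hcc hε
  have hevent : {ω | hitTime αa (Za ω) + ε < hitTime αb (Zb ω) ∧
      hitTime αa (Za ω) + ε < hitTime αc (Zc ω)}
      = {ω | u (Za ω) < Zb ω ∧ v (Za ω) < Zc ω} := by
    ext ω
    simp only [mem_ofPred_eq, lt_hitTime_iff hpb hcb htb (hshift _),
      lt_hitTime_iff hpc hcc htc (hshift _), u, v]
  have hmeasure : P {ω | u (Za ω) < Zb ω ∧ v (Za ω) < Zc ω} = ∫⁻ y in Ioi 0,
      ENNReal.ofReal (αa y * exp (-cumHaz αa y - cumHaz αb (y + ε) - cumHaz αc (y + ε))) := by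
    have hg : Measurable fun z => ENNReal.ofReal (exp (-u z)) * ENNReal.ofReal (exp (-v z)) := by
      fun_prop
    rw [measure_lt_and_lt_eq_lintegral_map hZa hZb hZc hindep hindep' hu hv,
      map_eq_expMeasure_one hZa hexpa,
      lintegral_congr fun z => by rw [hexpb (u z) (cumHaz_nonneg hpb hcb (hshift z)),
        hexpc (v z) (cumHaz_nonneg hpc hcc (hshift z))],
      lintegral_expMeasure_one hg, lintegral_Ioi_eq_lintegral_cumHaz hpa hca hta]
    refine setLIntegral_congr_fun measurableSet_Ioi fun y hy => ?_
    simp only [u, v, hitTime_cumHaz hpa hca hta (le_of_lt hy)]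
    rw [← ENNReal.ofReal_mul (exp_pos _).le,
      ← ENNReal.ofReal_mul (exp_pos _).le, ← ENNReal.ofReal_mul (hpa y (le_of_lt hy)).le,
      ← exp_add, ← exp_add]
    ring_nf
  rw [measureReal_def, hevent, hmeasure, integral_eq_lintegral_of_nonneg_ae
    (ae_restrict_of_forall_mem measurableSet_Ioi fun y hy =>
      mul_nonneg (hpa y (le_of_lt hy)).le (exp_pos _).le)
    ((continuousOn_mul_exp_neg_cumHaz hca hcb hcc hε).aestronglyMeasurable measurableSet_Ioi)]

end clocks

lemma lt_abs_min_sub_min_iff {a b c ε : ℝ} (hε : 0 ≤ ε) :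
    ε < |min a b - min a c| ↔ (b + ε < c ∧ b + ε < a) ∨ (c + ε < b ∧ c + ε < a) := by
  rw [lt_abs]
  grind

/-- (Pairwise near-simultaneous default probability.) For distinct banks
`i ≠ j` in `{1, …, K}` and any `ε > 0`,
`P(|τ_i − τ_j| ≤ ε) = 1 − ∫_0^∞ α_j(y) e^{−A_j(y) − A_i(y+ε) − A_0(y+ε)} dy
                        − ∫_0^∞ α_i(y) e^{−A_i(y) − A_j(y+ε) − A_0(y+ε)} dy`. -/
theorem pairwise_near_simultaneous_default
    {Ω : Type*} [MeasurableSpace Ω] (P : Measure Ω) [IsProbabilityMeasure P]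
    (K : ℕ) (Z : Fin (K + 1) → Ω → ℝ) (α : Fin (K + 1) → ℝ → ℝ)
    (hZmeas : ∀ i, Measurable (Z i))
    (hZindep : iIndepFun Z P)
    (hZexp : ∀ i, ∀ t : ℝ, 0 ≤ t → P {ω | t < Z i ω} = ENNReal.ofReal (Real.exp (-t)))
    (hαpos : ∀ i t, 0 ≤ t → 0 < α i t)
    (hαcont : ∀ i, ContinuousOn (α i) (Set.Ici 0))
    (hAinf : ∀ i, Filter.Tendsto (cumHaz (α i)) Filter.atTop Filter.atTop)
    (i j : Fin K) (hij : i ≠ j) (ε : ℝ) (hε : 0 < ε) :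
    P {ω | |min (hitTime (α 0) (Z 0 ω)) (hitTime (α i.succ) (Z i.succ ω))
          - min (hitTime (α 0) (Z 0 ω)) (hitTime (α j.succ) (Z j.succ ω))| ≤ ε}
      = 1 - ENNReal.ofReal
          ((∫ y in Set.Ioi (0 : ℝ), α j.succ y *
              Real.exp (-cumHaz (α j.succ) y - cumHaz (α i.succ) (y + ε) - cumHaz (α 0) (y + ε)))
            + ∫ y in Set.Ioi (0 : ℝ), α i.succ y *
              Real.exp (-cumHaz (α i.succ) y - cumHaz (α j.succ) (y + ε) - cumHaz (α 0) (y + ε))) := by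
  set η : Fin (K + 1) → Ω → ℝ := fun k ω => hitTime (α k) (Z k ω)
  have hη : ∀ k, Measurable (η k) := fun k =>
    (monotone_hitTime (hAinf k)).measurable.comp (hZmeas k)
  let leads : Fin K → Fin K → Set Ω := fun k l =>
    {ω | η k.succ ω + ε < η l.succ ω ∧ η k.succ ω + ε < η 0 ω}
  have hleads : ∀ k l, MeasurableSet (leads k l) := fun k l =>
    (measurableSet_lt (by fun_prop) (hη _)).inter (measurableSet_lt (by fun_prop) (hη 0))
  have hlaw : ∀ k l, k ≠ l → P.real (leads k l) = ∫ y in Ioi (0 : ℝ), α k.succ y *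
      exp (-cumHaz (α k.succ) y - cumHaz (α l.succ) (y + ε) - cumHaz (α 0) (y + ε)) :=
    fun k l hkl => measureReal_hitTime_add_lt_hitTime_and (hαpos _) (hαcont _) (hAinf _)
      (hαpos _) (hαcont _) (hAinf _) (hαpos _) (hαcont _) (hAinf _)
      (hZmeas _) (hZmeas _) (hZmeas _) (hZexp _) (hZexp _) (hZexp _)
      (hZindep.indepFun_prodMk hZmeas l.succ 0 k.succ
        (Fin.succ_injective K |>.ne hkl.symm) (Fin.succ_ne_zero k).symm).symm
      (hZindep.indepFun (Fin.succ_ne_zero l)) hε.le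
  have hevent : {ω | |min (η 0 ω) (η i.succ ω) - min (η 0 ω) (η j.succ ω)| ≤ ε}
      = (leads i j ∪ leads j i)ᶜ := by
    ext ω
    simp only [mem_ofPred_eq, mem_compl_iff, mem_union, leads, ← lt_abs_min_sub_min_iff hε.le,
      not_lt]
  have hdisj : Disjoint (leads i j) (leads j i) :=
    disjoint_left.2 fun ω h h' => by linarith [h.1, h'.1]
  rw [hevent, prob_compl_eq_one_sub ((hleads i j).union (hleads j i)), ← ofReal_measureReal,
    measureReal_union hdisj (hleads j i), hlaw i j hij, hlaw j i hij.symm, add_comm]
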